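/- For n ≥ 2, a permutation σ = a_1...a_n avoids the barred pattern bar132bar4 if and only if a_1 = 1 and a_n = n. Consequently |Av_n(bar132bar4)| = (n-2)!. -/

import Mathlib

/-- `σ` avoids the barred pattern `bar1 3 2 bar4`: every occurrence `a_i a_j` of `21`
extends to an occurrence `a_k a_i a_j a_l` of `1324` with `k < i` and `j < l`. -/
def avoidsBar1324 {n : ℕ} (σ : Equiv.Perm (Fin n)) : Prop :=
  ∀ i j : Fin n, i < j → σ j < σ i →
    ∃ k l : Fin n, k < i ∧ j < l ∧ σ k < σ j ∧ σ i < σ l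

/-!
A descent at the first position, or one ending at the last position, can never be extended
to an occurrence of `1324`, since there is no room for `a_k` or `a_l`. If `σ` moved `1`, the
pair `(a_1, 1)` would be such a descent; dually for `n`. Conversely, if `a_1 = 1` and `a_n = n`,
these two entries serve as `a_k` and `a_l` for every descent. The avoiders are therefore the
permutations of the `n - 2` middle positions.
-/

open Equiv Finset

namespace Equiv.Perm

variable {α : Type*} [Fintype α] [DecidableEq α]

theorem card_subtype_forall_mem_apply_eq (s : Finset α) :
    Nat.card {σ : Perm α // ∀ x ∈ s, σ x = x} = (Fintype.card α - #s).factorial := by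
  have e : {σ : Perm α // ∀ x ∈ s, σ x = x} ≃ Perm {x // x ∉ s} :=
    (subtypeEquivRight fun σ => by simp only [not_not]).trans
      (Perm.subtypeEquivSubtypePerm (· ∉ s)).symm
  rw [Nat.card_congr e, Nat.card_perm, Nat.card_eq_fintype_card,
    Fintype.card_subtype_compl, Fintype.card_coe]

theorem card_subtype_apply_eq_and_apply_eq {a b : α} (hab : a ≠ b) :
    Nat.card {σ : Perm α // σ a = a ∧ σ b = b} = (Fintype.card α - 2).factorial := by
  have e : {σ : Perm α // σ a = a ∧ σ b = b} ≃
      {σ : Perm α // ∀ x ∈ ({a, b} : Finset α), σ x = x} :=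
    subtypeEquivRight fun σ => by simp
  rw [Nat.card_congr e, card_subtype_forall_mem_apply_eq, card_pair hab]

end Equiv.Perm

section

variable {n : ℕ} {σ : Perm (Fin n)} {a b : Fin n}

theorem avoidsBar1324.apply_eq_of_isBot (h : avoidsBar1324 σ) (ha : IsBot a) : σ a = a := by
  by_contra hσa
  obtain ⟨j, hj⟩ := σ.surjective a
  have hlt : a < j := (ha j).lt_of_ne fun he => hσa (he ▸ hj)
  obtain ⟨k, -, hk, -⟩ := h a j hlt (hj ▸ (ha _).lt_of_ne' hσa)
  exact not_lt_of_ge (ha k) hk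

theorem avoidsBar1324.apply_eq_of_isTop (h : avoidsBar1324 σ) (hb : IsTop b) : σ b = b := by
  by_contra hσb
  obtain ⟨i, hi⟩ := σ.surjective b
  have hlt : i < b := (hb i).lt_of_ne fun he => hσb (he ▸ hi)
  obtain ⟨-, l, -, hl, -⟩ := h i b hlt (hi ▸ (hb _).lt_of_ne hσb)
  exact not_lt_of_ge (hb l) hl

theorem avoidsBar1324_of_apply_eq (ha : IsBot a) (hb : IsTop b) (hσa : σ a = a)
    (hσb : σ b = b) : avoidsBar1324 σ := by
  intro i j hij hσij
  have hai : a < i :=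
    (ha i).lt_of_ne fun he => not_lt_of_ge (ha (σ j)) (by rwa [← he, hσa] at hσij)
  have hjb : j < b :=
    (hb j).lt_of_ne fun he => not_lt_of_ge (hb (σ i)) (by rwa [he, hσb] at hσij)
  refine ⟨a, b, hai, hjb, ?_, ?_⟩
  · rw [hσa]
    exact (ha _).lt_of_ne fun he => (hai.trans hij).ne (σ.injective (hσa.trans he))
  · rw [hσb]
    exact (hb _).lt_of_ne fun he => (hij.trans hjb).ne (σ.injective (he.trans hσb.symm))

theorem avoidsBar1324_iff_apply_eq (ha : IsBot a) (hb : IsTop b) :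
    avoidsBar1324 σ ↔ σ a = a ∧ σ b = b :=
  ⟨fun h => ⟨h.apply_eq_of_isBot ha, h.apply_eq_of_isTop hb⟩,
    fun ⟨hσa, hσb⟩ => avoidsBar1324_of_apply_eq ha hb hσa hσb⟩

end

theorem avoidsBar1324_iff (n : ℕ) (hn : 2 ≤ n) :
    (∀ σ : Equiv.Perm (Fin n),
      avoidsBar1324 σ ↔
        σ ⟨0, by omega⟩ = ⟨0, by omega⟩ ∧ σ ⟨n - 1, by omega⟩ = ⟨n - 1, by omega⟩) ∧
    Nat.card {σ : Equiv.Perm (Fin n) // avoidsBar1324 σ} = Nat.factorial (n - 2) := by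
  have hbot : IsBot (⟨0, by omega⟩ : Fin n) := fun x => Fin.le_def.2 x.val.zero_le
  have htop : IsTop (⟨n - 1, by omega⟩ : Fin n) := fun x =>
    Fin.le_def.2 (Nat.le_sub_one_of_lt x.isLt)
  have hne : (⟨0, by omega⟩ : Fin n) ≠ ⟨n - 1, by omega⟩ :=
    Fin.ne_of_val_ne (show 0 ≠ n - 1 by omega)
  refine ⟨fun σ => avoidsBar1324_iff_apply_eq hbot htop, ?_⟩
  rw [Nat.card_congr (subtypeEquivRight fun σ => avoidsBar1324_iff_apply_eq hbot htop),
    Perm.card_subtype_apply_eq_and_apply_eq hne, Fintype.card_fin]
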